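/- Let G be a group generated by finite set S, π : G → H surjective onto a finite group with T = π(S), such that some element h of H has T-word length exactly n and no element of H has greater length. Fix d < n/2 and let N ≥ (2n² + 2nd + 2n − d)/(n − 2d), and set A = {a ∈ G : |a|_S ≤ N and π(a) ∈ T}. Then A generates G, and there exists g ∈ π^{-1}(h) with |g|_A = n such that every g' ∈ G with d_A(g, g') ≤ d satisfies |g'|_A ≤ n. In particular the dead-end depth of g with respect to A is greater than d. -/
import Mathlib


/-- Word length of `g` with respect to generating set `S` (using `S ∪ S⁻¹`). -/
noncomputable def wl {G : Type*} [Group G] (S : Set G) (g : G) : ℕ :=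
  sInf {n | ∃ l : List G, (∀ x ∈ l, x ∈ S ∨ x⁻¹ ∈ S) ∧ l.length = n ∧ l.prod = g}

/-- Word metric with respect to `S`. -/
noncomputable def wdist {G : Type*} [Group G] (S : Set G) (g h : G) : ℕ := wl S (g⁻¹ * h)

/-- Dead-end depth of `g` with respect to `A`: distance to the nearest element strictly
farther from the identity, `⊤` if none exists. -/
noncomputable def depth {G : Type*} [Group G] (A : Set G) (g : G) : ℕ∞ :=
  sInf ((fun g' => (wdist A g g' : ℕ∞)) '' {g' | wl A g < wl A g'})

/-- Partial product `u 0 * u 1 * ⋯ * u (i-1)`. -/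
def pprod {M : Type*} [Monoid M] (u : ℕ → M) (i : ℕ) : M := ((List.range i).map u).prod

namespace Stmt12Aux

variable {G : Type*} [Group G] {K : Type*} [Group K]

theorem wl_le {S : Set G} {g : G} {l : List G} (hl : ∀ x ∈ l, x ∈ S ∨ x⁻¹ ∈ S)
    (hp : l.prod = g) : wl S g ≤ l.length :=
  Nat.sInf_le ⟨l, hl, rfl, hp⟩

theorem wl_one {S : Set G} : wl S (1 : G) = 0 :=
  Nat.le_zero.mp (wl_le (l := []) (by simp) rfl)

theorem exists_rep {S : Set G} (hgen : Subgroup.closure S = ⊤) (g : G) :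
    ∃ l : List G, (∀ x ∈ l, x ∈ S ∨ x⁻¹ ∈ S) ∧ l.prod = g := by
  have hg : g ∈ Submonoid.closure (S ∪ S⁻¹) := by
    rw [← Subgroup.closure_toSubmonoid, hgen]; trivial
  obtain ⟨l, hl, hp⟩ := Submonoid.exists_list_of_mem_closure hg
  refine ⟨l, fun x hx => ?_, hp⟩
  rcases hl x hx with h | h
  · exact Or.inl h
  · exact Or.inr (Set.mem_inv.mp h)

theorem exists_min_rep {S : Set G} {g : G}
    (hex : ∃ l : List G, (∀ x ∈ l, x ∈ S ∨ x⁻¹ ∈ S) ∧ l.prod = g) :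
    ∃ l : List G, (∀ x ∈ l, x ∈ S ∨ x⁻¹ ∈ S) ∧ l.prod = g ∧ l.length = wl S g := by
  have hne : {m | ∃ l : List G, (∀ x ∈ l, x ∈ S ∨ x⁻¹ ∈ S) ∧ l.length = m ∧ l.prod = g}.Nonempty :=
    let ⟨l, hl, hp⟩ := hex; ⟨l.length, l, hl, rfl, hp⟩
  obtain ⟨l, hl, hlen, hp⟩ := Nat.sInf_mem hne
  exact ⟨l, hl, hp, hlen⟩

theorem wl_mul_le {S : Set G} {g g' : G} (hgen : Subgroup.closure S = ⊤) :
    wl S (g * g') ≤ wl S g + wl S g' := by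
  obtain ⟨l, hl, hp, hlen⟩ := exists_min_rep (exists_rep hgen g)
  obtain ⟨l', hl', hp', hlen'⟩ := exists_min_rep (exists_rep hgen g')
  have := wl_le (S := S) (l := l ++ l') (g := g * g')
    (by intro x hx; rcases List.mem_append.mp hx with h | h; exacts [hl x h, hl' x h])
    (by rw [List.prod_append, hp, hp'])
  simpa [hlen, hlen'] using this

theorem wl_inv_le {S : Set G} {g : G} (hgen : Subgroup.closure S = ⊤) :
    wl S g⁻¹ ≤ wl S g := by
  obtain ⟨l, hl, hp, hlen⟩ := exists_min_rep (exists_rep hgen g)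
  have := wl_le (S := S) (l := (l.map (·⁻¹)).reverse) (g := g⁻¹)
    (by
      intro x hx
      simp only [List.mem_reverse, List.mem_map] at hx
      obtain ⟨y, hy, rfl⟩ := hx
      rcases hl y hy with h | h
      · exact Or.inr (by simpa using h)
      · exact Or.inl h)
    (by rw [List.prod_reverse_noncomm]; simp [hp])
  simpa [hlen] using this

theorem wl_inv {S : Set G} {g : G} (hgen : Subgroup.closure S = ⊤) :
    wl S g⁻¹ = wl S g :=
  le_antisymm (wl_inv_le hgen) (by simpa using wl_inv_le (g := g⁻¹) hgen)

theorem wl_prod_le {S : Set G} (hgen : Subgroup.closure S = ⊤) (C : ℕ) :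
    ∀ l : List G, (∀ x ∈ l, wl S x ≤ C) → wl S l.prod ≤ C * l.length := by
  intro l
  induction l with
  | nil => intro _; simp [wl_one]
  | cons a t ih =>
    intro hmem
    calc wl S (a * t.prod) ≤ wl S a + wl S t.prod := wl_mul_le hgen
    _ ≤ C + C * t.length := by
        exact Nat.add_le_add (hmem a (by simp)) (ih fun x hx => hmem x (by simp [hx]))
    _ = C * (a :: t).length := by simp [List.length_cons, Nat.mul_succ, Nat.add_comm]

theorem wl_map_le (f : G →* K) {S : Set G} {T : Set K} {g : G}
    (hST : ∀ x : G, (x ∈ S ∨ x⁻¹ ∈ S) → (f x ∈ T ∨ (f x)⁻¹ ∈ T))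
    (hex : ∃ l : List G, (∀ x ∈ l, x ∈ S ∨ x⁻¹ ∈ S) ∧ l.prod = g) :
    wl T (f g) ≤ wl S g := by
  obtain ⟨l, hl, hp, hlen⟩ := exists_min_rep hex
  have := wl_le (S := T) (l := l.map f) (g := f g)
    (by
      intro x hx
      simp only [List.mem_map] at hx
      obtain ⟨y, hy, rfl⟩ := hx
      exact hST y (hl y hy))
    (by rw [← hp]; exact (map_list_prod f l).symm)
  simpa [hlen] using this

theorem prod_range_telescope (c : ℕ → G) :
    ∀ k : ℕ, ((List.range k).map (fun i => (c i)⁻¹ * c (i + 1))).prod = (c 0)⁻¹ * c k := by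
  intro k
  induction k with
  | zero => simp
  | succ k ih => rw [List.range_succ]; simp [ih, mul_assoc]

theorem lift_list (f : G →* K) {S : Set G} :
    ∀ lt : List K, (∀ t ∈ lt, t ∈ f '' S ∨ t⁻¹ ∈ f '' S) →
      ∃ lg : List G, (∀ y ∈ lg, y ∈ S ∨ y⁻¹ ∈ S) ∧ lg.map f = lt := by
  intro lt
  induction lt with
  | nil => exact fun _ => ⟨[], by simp, by simp⟩
  | cons t ts ih =>
    intro hmem
    obtain ⟨lg, hlg, hmap⟩ := ih fun x hx => hmem x (by simp [hx])
    rcases hmem t (by simp) with ⟨s, hs, hfs⟩ | ⟨s, hs, hfs⟩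
    · refine ⟨s :: lg, ?_, by simp [hmap, hfs]⟩
      intro y hy
      rcases List.mem_cons.mp hy with rfl | hy
      exacts [Or.inl hs, hlg y hy]
    · refine ⟨s⁻¹ :: lg, ?_, by simp [hmap, map_inv, hfs]⟩
      intro y hy
      rcases List.mem_cons.mp hy with rfl | hy
      exacts [Or.inr (by simpa using hs), hlg y hy]

end Stmt12Aux


/-- Main construction: if `h ∈ H` has `T`-length exactly `n`, no element of `H` has greater
length, `2d < n` and `N ≥ (2n² + 2nd + 2n − d)/(n − 2d)`, then
`A = {a : |a|_S ≤ N, π(a) ∈ T}` generates `G` and there is `g ∈ π⁻¹(h)` with `|g|_A = n`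
such that every `g'` with `d_A(g,g') ≤ d` has `|g'|_A ≤ n`; in particular the dead-end
depth of `g` with respect to `A` exceeds `d`. -/
theorem stmt12 {G H : Type*} [Group G] [Group H] [Finite H] (π : G →* H)
    (hsurj : Function.Surjective π) (S : Set G) (hfin : S.Finite)
    (hgen : Subgroup.closure S = ⊤) (h : H) (n d N : ℕ)
    (hn : wl (π '' S) h = n) (hall : ∀ x : H, wl (π '' S) x ≤ n)
    (hd : 2 * d < n)
    (hN : (2 * (n : ℝ) ^ 2 + 2 * (n : ℝ) * (d : ℝ) + 2 * (n : ℝ) - (d : ℝ)) /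
        ((n : ℝ) - 2 * (d : ℝ)) ≤ (N : ℝ)) :
    Subgroup.closure {a : G | wl S a ≤ N ∧ π a ∈ π '' S} = ⊤ ∧
    ∃ g : G, π g = h ∧ wl {a : G | wl S a ≤ N ∧ π a ∈ π '' S} g = n ∧
      (∀ g' : G, wdist {a : G | wl S a ≤ N ∧ π a ∈ π '' S} g g' ≤ d →
        wl {a : G | wl S a ≤ N ∧ π a ∈ π '' S} g' ≤ n) ∧
      (d : ℕ∞) < depth {a : G | wl S a ≤ N ∧ π a ∈ π '' S} g := by
  classical
  open Stmt12Aux in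
  set T : Set H := π '' S with hT
  set A : Set G := {a : G | wl S a ≤ N ∧ π a ∈ T} with hA
  -- numeric facts
  have hdn : d < n := by omega
  have hdR : 2 * (d : ℝ) < (n : ℝ) := by exact_mod_cast hd
  have hposR : (0 : ℝ) < (n : ℝ) - 2 * d := by linarith
  have hNR : 2 * (n : ℝ) ^ 2 + 2 * n * d + 2 * n - d ≤ (N : ℝ) * ((n : ℝ) - 2 * d) :=
    (div_le_iff₀ hposR).mp hN
  have hq : (((n + d * N : ℕ)) : ℝ) / (((n - d : ℕ)) : ℝ) ≤ (N : ℝ) - 2 * n - 1 := by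
    have hcast : (((n - d : ℕ)) : ℝ) = (n : ℝ) - d := by
      rw [Nat.cast_sub hdn.le]
    rw [hcast, div_le_iff₀ (by linarith : (0 : ℝ) < (n : ℝ) - d)]
    push_cast
    nlinarith [mul_nonneg (Nat.cast_nonneg (α := ℝ) n) (Nat.cast_nonneg (α := ℝ) d)]
  have hNkey : 2 * n + ((n + d * N) / (n - d) + 1) ≤ N := by
    have hcast := Nat.cast_div_le (α := ℝ) (m := n + d * N) (n := n - d)
    have h1 : (((n + d * N) / (n - d) : ℕ) : ℝ) ≤ (N : ℝ) - 2 * n - 1 := le_trans hcast hq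
    have h2 : ((2 * n + ((n + d * N) / (n - d) + 1) : ℕ) : ℝ) ≤ (N : ℝ) := by
      push_cast
      linarith
    exact_mod_cast h2
  have hN1 : 1 ≤ N := le_trans (by omega : 1 ≤ 2 * n) (le_trans (Nat.le_add_right _ _) hNkey)
  -- T generates H
  have hTgen : Subgroup.closure T = ⊤ := by
    rw [hT, ← MonoidHom.map_closure, hgen]
    rw [← MonoidHom.range_eq_map]
    exact MonoidHom.range_eq_top_of_surjective π hsurj
  -- A generates G
  have hSsubA : S ⊆ A := fun s hs =>
    ⟨le_trans (wl_le (l := [s]) (by simp [hs]) (by simp)) hN1, ⟨s, hs, rfl⟩⟩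
  have hAgen : Subgroup.closure A = ⊤ :=
    eq_top_iff.mpr (hgen ▸ Subgroup.closure_mono hSsubA)
  have hdA : ∀ x : G, (x ∈ A ∨ x⁻¹ ∈ A) → (π x ∈ T ∨ (π x)⁻¹ ∈ T) := by
    rintro x (⟨-, hx⟩ | ⟨-, hx⟩)
    · exact Or.inl hx
    · right; rwa [map_inv] at hx
  have hwlTA : ∀ u : G, wl T (π u) ≤ wl A u := fun u =>
    wl_map_le π hdA (exists_rep hAgen u)
  -- bounded section β
  have hβex : ∀ x : H, ∃ b : G, π b = x ∧ wl S b ≤ n ∧ (x = 1 → b = 1) := by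
    intro x
    by_cases hx : x = 1
    · exact ⟨1, by simp [hx], by simp [wl_one], fun _ => rfl⟩
    · obtain ⟨lt, hlt, hltp, hltlen⟩ := exists_min_rep (exists_rep hTgen x)
      obtain ⟨lg, hlg, hmap⟩ := lift_list π lt (by rw [← hT]; exact hlt)
      refine ⟨lg.prod, ?_, ?_, fun h1 => absurd h1 hx⟩
      · rw [map_list_prod, hmap, hltp]
      · have hle := wl_le hlg rfl
        have hlen : lg.length = lt.length := by
          rw [← hmap, List.length_map]
        calc wl S lg.prod ≤ lg.length := hle
          _ = wl T x := by rw [hlen, hltlen]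
          _ ≤ n := hall x
  choose β hβ1 hβ2 hβ3 using hβex
  -- subdivision lemma
  have subdiv : ∀ (g' : G) (k L : ℕ), wl T (π g') = k → 1 ≤ k → wl S g' ≤ L →
      2 * n + (L / k + 1) ≤ N → wl A g' ≤ k := by
    intro g' k L hk hk1 hL hBN
    set B := L / k + 1 with hB
    obtain ⟨lt, hlt, hltp, hltlen⟩ := exists_min_rep (exists_rep hTgen (π g'))
    rw [hk] at hltlen
    obtain ⟨ls, hls, hlsp, hlslen⟩ := exists_min_rep (exists_rep hgen g')
    have hL0 : ls.length ≤ L := le_trans (le_of_eq hlslen) hL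
    have hkBL : L < k * B := by
      have := (Nat.div_lt_iff_lt_mul (by omega : 0 < k)).mp
        (Nat.lt_succ_self (L / k))
      rwa [mul_comm] at this
    set p : ℕ → G := fun i => (ls.take (min (i * B) ls.length)).prod with hp
    set c : ℕ → G := fun i => p i * β ((π (p i))⁻¹ * (lt.take i).prod) with hc
    have hc0 : c 0 = 1 := by
      rw [hc, hp]
      simp only [Nat.zero_mul, Nat.zero_min, List.take_zero, List.prod_nil, map_one, inv_one,
        one_mul]
      exact hβ3 1 rfl
    have hck : c k = g' := by
      rw [hc, hp]
      simp only []
      rw [min_eq_right (le_of_lt (lt_of_le_of_lt hL0 hkBL)), List.take_length, hlsp,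
        ← hltlen, List.take_length, hltp]
      rw [hβ3 _ (inv_mul_cancel _), mul_one]
    have hπc : ∀ j, π (c j) = (lt.take j).prod := by
      intro j
      rw [hc]
      simp only []
      rw [map_mul, hβ1]
      group
    have hmemA : ∀ i, i < k → ((c i)⁻¹ * c (i + 1)) ∈ A ∨ ((c i)⁻¹ * c (i + 1))⁻¹ ∈ A := by
      intro i hik
      have hilt : i < lt.length := by omega
      have hπx : π ((c i)⁻¹ * c (i + 1)) = lt[i]'hilt := by
        rw [map_mul, map_inv, hπc, hπc, List.prod_take_succ _ i hilt]
        group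
      -- word length bound
      set m := min (i * B) ls.length with hm
      set m' := min ((i + 1) * B) ls.length with hm'
      have hmm' : m ≤ m' := min_le_min (Nat.mul_le_mul_right _ (by omega)) le_rfl
      have hgenmin : ∀ a C L' : ℕ, min (a + C) L' ≤ min a L' + C := fun a C L' => by omega
      have hdiff : m' ≤ m + B := by
        rw [hm', hm, add_mul, one_mul]
        exact hgenmin (i * B) B ls.length
      have hslice : (p i)⁻¹ * p (i + 1) = ((ls.drop m).take (m' - m)).prod := by
        rw [hp]
        simp only []
        rw [← hm, ← hm']
        have he : ls.take m' = ls.take m ++ (ls.drop m).take (m' - m) := by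
          rw [← List.take_add]
          congr 1
          omega
        rw [he, List.prod_append]
        group
      have hwls : wl S ((p i)⁻¹ * p (i + 1)) ≤ B := by
        rw [hslice]
        refine le_trans (wl_le (fun x hx => hls x ?_) rfl) ?_
        · exact List.mem_of_mem_drop (List.mem_of_mem_take hx)
        · calc ((ls.drop m).take (m' - m)).length ≤ m' - m := by
                rw [List.length_take]; exact min_le_left _ _
            _ ≤ B := by omega
      have hwlx : wl S ((c i)⁻¹ * c (i + 1)) ≤ N := by
        have e : (c i)⁻¹ * c (i + 1) =
            (β ((π (p i))⁻¹ * (lt.take i).prod))⁻¹ *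
              (((p i)⁻¹ * p (i + 1)) * β ((π (p (i + 1)))⁻¹ * (lt.take (i + 1)).prod)) := by
          rw [hc]
          simp only []
          group
        rw [e]
        calc wl S _ ≤ wl S (β ((π (p i))⁻¹ * (lt.take i).prod))⁻¹ +
              wl S (((p i)⁻¹ * p (i + 1)) * β ((π (p (i + 1)))⁻¹ * (lt.take (i + 1)).prod)) :=
              wl_mul_le hgen
          _ ≤ wl S (β ((π (p i))⁻¹ * (lt.take i).prod))⁻¹ +
              (wl S ((p i)⁻¹ * p (i + 1)) +
                wl S (β ((π (p (i + 1)))⁻¹ * (lt.take (i + 1)).prod))) := by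
              exact Nat.add_le_add le_rfl (wl_mul_le hgen)
          _ ≤ n + (B + n) := by
              refine Nat.add_le_add (le_trans (wl_inv_le hgen) (hβ2 _)) ?_
              exact Nat.add_le_add hwls (hβ2 _)
          _ ≤ N := by omega
      rcases hlt _ (List.getElem_mem hilt) with ht | ht
      · exact Or.inl ⟨hwlx, hπx ▸ ht⟩
      · refine Or.inr ⟨le_trans (wl_inv_le hgen) hwlx, ?_⟩
        rw [map_inv, hπx]
        exact ht
    have hfin : wl A g' ≤ ((List.range k).map (fun i => (c i)⁻¹ * c (i + 1))).length := by
      refine wl_le ?_ ?_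
      · intro x hx
        simp only [List.mem_map, List.mem_range] at hx
        obtain ⟨i, hik, rfl⟩ := hx
        exact hmemA i hik
      · rw [prod_range_telescope c k, hc0, hck, inv_one, one_mul]
    simpa using hfin
  -- the element g
  obtain ⟨lt0, hlt0, hlt0p, hlt0len⟩ := exists_min_rep (exists_rep hTgen h)
  rw [hn] at hlt0len
  obtain ⟨lg0, hlg0, hmap0⟩ := lift_list π lt0 (by rw [← hT]; exact hlt0)
  have hπg : π lg0.prod = h := by rw [map_list_prod, hmap0, hlt0p]
  have hlg0len : lg0.length = n := by rw [← hlt0len, ← hmap0, List.length_map]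
  have hSg : wl S lg0.prod ≤ n := by
    have := wl_le hlg0 rfl
    omega
  have hlg0A : ∀ x ∈ lg0, x ∈ A ∨ x⁻¹ ∈ A := by
    intro x hx
    rcases hlg0 x hx with hxS | hxS
    · exact Or.inl ⟨le_trans (wl_le (l := [x]) (by simp [hxS]) (by simp)) hN1, ⟨x, hxS, rfl⟩⟩
    · exact Or.inr ⟨le_trans (wl_le (l := [x⁻¹]) (by simp [hxS]) (by simp)) hN1,
        ⟨x⁻¹, hxS, rfl⟩⟩
  have hgA : wl A lg0.prod = n := by
    refine le_antisymm ?_ ?_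
    · have := wl_le hlg0A rfl
      omega
    · calc n = wl T (π lg0.prod) := by rw [hπg, hn]
        _ ≤ wl A lg0.prod := hwlTA _
  -- main bound
  have main : ∀ g' : G, wdist A lg0.prod g' ≤ d → wl A g' ≤ n := by
    intro g' hdist
    unfold wdist at hdist
    set u := (lg0.prod)⁻¹ * g' with hu
    have hTu : wl T (π u) ≤ d := le_trans (hwlTA u) hdist
    have hSu : wl S u ≤ N * d := by
      obtain ⟨l, hl, hpr, hlen⟩ := exists_min_rep (exists_rep hAgen u)
      have hlet : ∀ x ∈ l, wl S x ≤ N := by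
        intro x hx
        rcases hl x hx with ⟨h1, -⟩ | ⟨h1, -⟩
        · exact h1
        · calc wl S x = wl S (x⁻¹)⁻¹ := by rw [inv_inv]
            _ ≤ wl S x⁻¹ := wl_inv_le hgen
            _ ≤ N := h1
      calc wl S u = wl S l.prod := by rw [hpr]
        _ ≤ N * l.length := wl_prod_le hgen N l hlet
        _ = N * wl A u := by rw [hlen]
        _ ≤ N * d := Nat.mul_le_mul_left _ hdist
    have hSg' : wl S g' ≤ n + d * N := by
      have he : g' = lg0.prod * u := by rw [hu]; group
      rw [he]
      calc wl S (lg0.prod * u) ≤ wl S lg0.prod + wl S u := wl_mul_le hgen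
        _ ≤ n + N * d := Nat.add_le_add hSg hSu
        _ = n + d * N := by ring
    have hkd : n ≤ wl T (π g') + d := by
      have he : lg0.prod = g' * u⁻¹ := by rw [hu]; group
      calc n = wl T (π lg0.prod) := by rw [hπg, hn]
        _ = wl T (π g' * (π u)⁻¹) := by rw [he, map_mul, map_inv]
        _ ≤ wl T (π g') + wl T (π u)⁻¹ := wl_mul_le hTgen
        _ ≤ wl T (π g') + d := Nat.add_le_add le_rfl (le_trans (wl_inv_le hTgen) hTu)
    have hkn : wl T (π g') ≤ n := hall (π g')
    have hk1 : 1 ≤ wl T (π g') := by omega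
    have harith : 2 * n + ((n + d * N) / wl T (π g') + 1) ≤ N := by
      have h1 : (n + d * N) / wl T (π g') ≤ (n + d * N) / (n - d) :=
        Nat.div_le_div_left (by omega) (by omega)
      calc 2 * n + ((n + d * N) / wl T (π g') + 1)
          ≤ 2 * n + ((n + d * N) / (n - d) + 1) := by
            exact Nat.add_le_add le_rfl (Nat.add_le_add h1 le_rfl)
        _ ≤ N := hNkey
    exact le_trans (subdiv g' (wl T (π g')) (n + d * N) rfl hk1 hSg' harith) hkn
  refine ⟨hAgen, lg0.prod, hπg, hgA, main, ?_⟩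
  unfold depth
  refine lt_of_lt_of_le (b := ((d + 1 : ℕ) : ℕ∞)) ?_ (le_sInf ?_)
  · exact_mod_cast Nat.lt_succ_self d
  · rintro b ⟨g', hg', rfl⟩
    simp only [Set.mem_setOf_eq, hgA] at hg'
    have hge : d + 1 ≤ wdist A lg0.prod g' := by
      by_contra hcon
      have h1 : wdist A lg0.prod g' ≤ d := by omega
      have h2 := main g' h1
      omega
    show ((d + 1 : ℕ) : ℕ∞) ≤ ((wdist A lg0.prod g' : ℕ) : ℕ∞)
    exact_mod_cast hge
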